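/- arXiv:1206.0955 — 2 statements merged into one kernel-verified Lean document; each statement's English description precedes it below -/
import Mathlib

section
/- Let H be a Borel subgroup of the real numbers with H ≠ ℝ. Then for any ε > 0 there exists p with 0 < p < ε such that the only integer multiple of p lying in H is 0 (i.e., ℤp ∩ H = {0}). -/
/-! By Steinhaus' theorem a measurable subgroup of positive Haar measure contains a neighbourhood
of `0`, hence is open, hence (being also closed) is the whole of a connected group. So a proper
Borel subgroup `H` of `ℝ` is Lebesgue-null, and so is each dilate `n⁻¹ • H` with `n ≠ 0`. The
countable union of these dilates cannot cover the interval `(0, ε)`, and any `p` in `(0, ε)`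
outside it works. -/

open MeasureTheory Set

namespace AddSubgroup

variable {G : Type*} [AddGroup G] [TopologicalSpace G] [IsTopologicalAddGroup G]
  [LocallyCompactSpace G] [MeasurableSpace G] [BorelSpace G]
  (μ : Measure G) [μ.IsAddHaarMeasure] [μ.InnerRegular] {H : AddSubgroup G}

theorem isOpen_of_addHaar_pos (hH : MeasurableSet (H : Set G)) (hpos : 0 < μ H) :
    IsOpen (H : Set G) :=
  H.isOpen_of_mem_nhds <|
    Filter.mem_of_superset (Measure.sub_mem_nhds_zero_of_addHaar_pos μ _ hH hpos)
      fun _ ⟨_, ha, _, hb, hab⟩ => hab ▸ H.sub_mem ha hb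

theorem addHaar_eq_zero_of_ne_univ [ConnectedSpace G] (hH : MeasurableSet (H : Set G))
    (hne : (H : Set G) ≠ univ) : μ H = 0 := by
  by_contra hpos
  have hopen := isOpen_of_addHaar_pos μ hH (pos_iff_ne_zero.mpr hpos)
  exact hne <| IsClopen.eq_univ ⟨H.isClosed_of_isOpen hopen, hopen⟩ ⟨0, H.zero_mem⟩

end AddSubgroup

theorem Real.volume_setOf_exists_int_mul_mem_eq_zero {S : Set ℝ} (hS : volume S = 0) :
    volume {p : ℝ | ∃ n : ℤ, n ≠ 0 ∧ (n : ℝ) * p ∈ S} = 0 := by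
  refine measure_mono_null (t := ⋃ n : ℤ, ⋃ _ : n ≠ 0, (fun p => (n : ℝ) * p) ⁻¹' S)
    (fun p ⟨n, hn, hp⟩ => mem_iUnion₂.mpr ⟨n, hn, hp⟩) ?_
  refine measure_iUnion_null fun n => measure_iUnion_null fun hn => ?_
  rw [Real.volume_preimage_mul_left (Int.cast_ne_zero.mpr hn), hS, mul_zero]

theorem borel_proper_subgroup_exists_free_generator
    (H : AddSubgroup ℝ) (hBorel : MeasurableSet (H : Set ℝ))
    (hne : (H : Set ℝ) ≠ Set.univ) :
    ∀ ε : ℝ, 0 < ε → ∃ p : ℝ, 0 < p ∧ p < ε ∧ ∀ n : ℤ, (n : ℝ) * p ∈ H → n = 0 := by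
  intro ε hε
  have hnull := Real.volume_setOf_exists_int_mul_mem_eq_zero
    (H.addHaar_eq_zero_of_ne_univ volume hBorel hne)
  have hpos : volume (Ioo 0 ε \ {p : ℝ | ∃ n : ℤ, n ≠ 0 ∧ (n : ℝ) * p ∈ (H : Set ℝ)}) ≠ 0 := by
    rw [measure_sdiff_null hnull, Real.volume_Ioo]
    simpa using hε
  obtain ⟨p, ⟨hp0, hpε⟩, hp⟩ := nonempty_of_measure_ne_zero hpos
  exact ⟨p, hp0, hpε, fun n hn => by_contra fun h => hp ⟨n, h, hn⟩⟩
end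

section
/- Let Y and X be measurable spaces, S : Y → Y and the flow built under a ceiling function r : Y → [R₁, R₂] with 0 < R₁ ≤ r(y) < R₂. For d₁, d₂ ∈ Z¹(ℤ ⋉ Y) (unitary 𝕋-valued 1-cocycles of the induced ℤ-action on Y) define p*(d)(t,x) := d(N(t,x), π(x)) where N(t,x) ∈ ℤ is the number of times the flow orbit of x crosses the base up to time t and π is the projection to the base. Define metrics ρ_X(c₁,c₂) := max_{0 ≤ t < R₁} ∫_X |c₁(t,x) − c₂(t,x)| dμ(x) and ρ_Y(d₁,d₂) := ∫_Y |d₁(1,y) − d₂(1,y)| dν(y). Then ρ_X(p*(d₁), p*(d₂)) ≤ R₂ · ρ_Y(d₁, d₂). In particular, p* is continuous for these metrics. -/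
/-! Since a cocycle is trivial at `0` and the crossing number is `0` or `1`, the integrand at
`(y, h)` is bounded by `‖d₁ 1 y - d₂ 1 y‖`; the flow space lies in `Y × [0, R₂)`, so integrating
out the height costs at most a factor `R₂`. -/

open MeasureTheory
open scoped ENNReal

theorem cocycle_zero_eq_one {Y M : Type*} [MonoidWithZero M] [IsLeftCancelMulZero M]
    {T : Equiv.Perm Y} {d : ℤ → Y → M}
    (hd : ∀ (m n : ℤ) (y : Y), d (m + n) y = d m ((T ^ n) y) * d n y)
    {y : Y} (hy : d 0 y ≠ 0) : d 0 y = 1 :=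
  (mul_eq_left₀ hy).mp (by simpa using (hd 0 0 y).symm)

theorem setIntegral_le_measureReal_mul_integral_of_subset_univ_prod
    {α β : Type*} [MeasurableSpace α] [MeasurableSpace β] {ν : Measure α} {μ : Measure β}
    [SFinite ν] [SFinite μ] {s : Set (α × β)} {t : Set β} (hs : s ⊆ Set.univ ×ˢ t) (ht : μ t ≠ ∞)
    {f : α × β → ℝ} {g : α → ℝ} (hg : Integrable g ν) (hf : ∀ p, 0 ≤ f p)
    (hfg : ∀ p, f p ≤ g p.1) :
    ∫ p in s, f p ∂ν.prod μ ≤ μ.real t * ∫ x, g x ∂ν := by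
  have : IsFiniteMeasure (μ.restrict t) := isFiniteMeasure_restrict.mpr ht
  have hg_prod : IntegrableOn (fun p ↦ g p.1) (Set.univ ×ˢ t) (ν.prod μ) := by
    rw [IntegrableOn, ← Measure.prod_restrict, Measure.restrict_univ]
    exact hg.comp_fst _
  calc ∫ p in s, f p ∂ν.prod μ ≤ ∫ p in s, g p.1 ∂ν.prod μ :=
        integral_mono_of_nonneg (.of_forall hf) (hg_prod.mono_set hs) (.of_forall hfg)
    _ ≤ ∫ p in Set.univ ×ˢ t, g p.1 ∂ν.prod μ :=
        setIntegral_mono_set hg_prod (.of_forall fun p ↦ (hf p).trans (hfg p))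
          (.of_forall hs)
    _ = μ.real t * ∫ x, g x ∂ν := by
        rw [← Measure.prod_restrict, Measure.restrict_univ, integral_fun_fst,
          measureReal_restrict_apply_univ, smul_eq_mul]

theorem norm_sub_apply_ite_le {Y E : Type*} [SeminormedAddCommGroup E] [One E]
    {d₁ d₂ : ℤ → Y → E} {y : Y} (h₁ : d₁ 0 y = 1) (h₂ : d₂ 0 y = 1) (P : Prop) [Decidable P] :
    ‖d₁ (if P then 1 else 0) y - d₂ (if P then 1 else 0) y‖ ≤ ‖d₁ 1 y - d₂ 1 y‖ := by
  split_ifs <;> simp [h₁, h₂]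

theorem induced_cocycle_metric_estimate_general
    {Y : Type*} [MeasurableSpace Y] (ν : Measure Y) [IsProbabilityMeasure ν]
    (S : Y ≃ᵐ Y)
    (R₁ R₂ : ℝ) (r : Y → ℝ)
    (hr : ∀ y, R₁ ≤ r y ∧ r y < R₂)
    (d₁ d₂ : ℤ → Y → ℂ)
    (hm₁ : ∀ k, Measurable (d₁ k)) (hm₂ : ∀ k, Measurable (d₂ k))
    (hT₁ : ∀ k y, ‖d₁ k y‖ = 1) (hT₂ : ∀ k y, ‖d₂ k y‖ = 1)
    (hcoc₁ : ∀ (m n : ℤ) (y : Y), d₁ (m + n) y = d₁ m ((S.toEquiv ^ n) y) * d₁ n y)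
    (hcoc₂ : ∀ (m n : ℤ) (y : Y), d₂ (m + n) y = d₂ m ((S.toEquiv ^ n) y) * d₂ n y) :
    ∀ t : ℝ, 0 ≤ t → t < R₁ →
      (∫ p in {p : Y × ℝ | 0 ≤ p.2 ∧ p.2 < r p.1},
          ‖d₁ (if r p.1 ≤ p.2 + t then 1 else 0) p.1 -
            d₂ (if r p.1 ≤ p.2 + t then 1 else 0) p.1‖ ∂(ν.prod volume))
        ≤ R₂ * ∫ y, ‖d₁ 1 y - d₂ 1 y‖ ∂ν := by
  intro t ht htR₁
  obtain ⟨y₀⟩ := nonempty_of_isProbabilityMeasure ν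
  have hR₂ : 0 ≤ R₂ := by linarith [hr y₀]
  have hzero₁ y : d₁ 0 y = 1 := cocycle_zero_eq_one hcoc₁ (by simp [← norm_ne_zero_iff, hT₁])
  have hzero₂ y : d₂ 0 y = 1 := cocycle_zero_eq_one hcoc₂ (by simp [← norm_ne_zero_iff, hT₂])
  have hint : Integrable (fun y ↦ ‖d₁ 1 y - d₂ 1 y‖) ν :=
    .of_bound ((hm₁ 1).sub (hm₂ 1)).norm.aestronglyMeasurable 2 <| .of_forall fun y ↦ by
      simpa [hT₁, hT₂, one_add_one_eq_two] using norm_sub_le (d₁ 1 y) (d₂ 1 y)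
  calc _ ≤ volume.real (Set.Ico 0 R₂) * ∫ y, ‖d₁ 1 y - d₂ 1 y‖ ∂ν :=
        setIntegral_le_measureReal_mul_integral_of_subset_univ_prod
          (fun p hp ↦ by exact ⟨trivial, hp.1, hp.2.trans (hr p.1).2⟩) measure_Ico_lt_top.ne hint
          (fun _ ↦ norm_nonneg _) (fun p ↦ norm_sub_apply_ite_le (hzero₁ _) (hzero₂ _) _)
    _ = R₂ * ∫ y, ‖d₁ 1 y - d₂ 1 y‖ ∂ν := by rw [Real.volume_real_Ico_of_le hR₂, sub_zero]

theorem induced_cocycle_metric_estimate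
    {Y : Type*} [MeasurableSpace Y] (ν : Measure Y) [IsProbabilityMeasure ν]
    (S : Y ≃ᵐ Y)
    (R₁ R₂ : ℝ) (hR₁ : 0 < R₁) (r : Y → ℝ) (hrm : Measurable r)
    (hr : ∀ y, R₁ ≤ r y ∧ r y < R₂)
    (d₁ d₂ : ℤ → Y → ℂ)
    (hm₁ : ∀ k, Measurable (d₁ k)) (hm₂ : ∀ k, Measurable (d₂ k))
    (hT₁ : ∀ k y, ‖d₁ k y‖ = 1) (hT₂ : ∀ k y, ‖d₂ k y‖ = 1)
    (hcoc₁ : ∀ (m n : ℤ) (y : Y), d₁ (m + n) y = d₁ m ((S.toEquiv ^ n) y) * d₁ n y)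
    (hcoc₂ : ∀ (m n : ℤ) (y : Y), d₂ (m + n) y = d₂ m ((S.toEquiv ^ n) y) * d₂ n y) :
    ∀ t : ℝ, 0 ≤ t → t < R₁ →
      (∫ p in {p : Y × ℝ | 0 ≤ p.2 ∧ p.2 < r p.1},
          ‖d₁ (if r p.1 ≤ p.2 + t then 1 else 0) p.1 -
            d₂ (if r p.1 ≤ p.2 + t then 1 else 0) p.1‖ ∂(ν.prod volume))
        ≤ R₂ * ∫ y, ‖d₁ 1 y - d₂ 1 y‖ ∂ν :=
  induced_cocycle_metric_estimate_general ν S R₁ R₂ r hr d₁ d₂ hm₁ hm₂ hT₁ hT₂ hcoc₁ hcoc₂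
end
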